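/- Let n ≥ 2. For a signed partition I of [±n], let I₀ (the zero closure of I) denote the least B_n-partition K with I ≤ K. Then: (1) for all signed partitions I, J, one has (I ⊔ J)₀ = I₀ ·_B J₀, where ·_B is the product on P_n^B given by the least common coarsening within P_n^B; and (2) the congruence on SP_n generated by the set T of pairs (ε_{−i,i} ⊔ ε_{−j,j}, ε_{−i,i} ⊔ ε_{i,j}) for 1 ≤ i < j ≤ n equals {(I, J) ∈ SP_n × SP_n : I₀ = J₀}. -/

import Mathlib

instance setoidCommMonoid (α : Type*) : CommMonoid (Setoid α) where
  mul := (· ⊔ ·)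
  one := ⊥
  mul_assoc := sup_assoc
  one_mul := bot_sup_eq
  mul_one := sup_bot_eq
  mul_comm := sup_comm

def muSet {α : Type*} (X : Set α) : Setoid α :=
  Relation.EqvGen.setoid (fun x y => x ∈ X ∧ y ∈ X)

def mu {α : Type*} (i j : α) : Setoid α := muSet {i, j}

/-- `[±n]`: nonzero integers of absolute value at most `n`, with the order from `ℤ`. -/
abbrev PM (n : ℕ) := {k : ℤ // k ≠ 0 ∧ |k| ≤ (n : ℤ)}

namespace PM

/-- The negation involution `k ↦ -k` on `[±n]`. -/
def neg {n : ℕ} (x : PM n) : PM n :=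
  ⟨-x.1, by obtain ⟨h1, h2⟩ := x.2; exact ⟨neg_ne_zero.mpr h1, by rwa [abs_neg]⟩⟩

@[simp] theorem neg_neg {n : ℕ} (x : PM n) : x.neg.neg = x := Subtype.ext (by simp [neg])

theorem neg_lt_neg {n : ℕ} {x y : PM n} (h : x < y) : y.neg < x.neg := by
  have h' : x.1 < y.1 := Subtype.coe_lt_coe.mpr h
  rw [← Subtype.coe_lt_coe]
  show -y.1 < -x.1
  omega

theorem neg_lt_pos {n : ℕ} {x y : PM n} (hx : 0 < x.1) (hy : 0 < y.1) : x.neg < y := by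
  rw [← Subtype.coe_lt_coe]
  show -x.1 < y.1
  omega

theorem pos_ne_neg {n : ℕ} {x y : PM n} (hx : 0 < x.1) (hy : 0 < y.1) : y ≠ x.neg := by
  intro h
  have : y.1 = -x.1 := congrArg Subtype.val h
  omega

theorem neg_lt_self {n : ℕ} {x : PM n} (hx : 0 < x.1) : x.neg < x := neg_lt_pos hx hx

/-- The absolute value map `x ↦ |x|` from `[±n]` to its positive part. -/
def abs {n : ℕ} (x : PM n) : PM n :=
  ⟨|x.1|, by obtain ⟨h1, h2⟩ := x.2; exact ⟨abs_ne_zero.mpr h1, by rwa [abs_abs]⟩⟩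

end PM

/-- Image of a subset of `[±n]` under negation. -/
def negSet {n : ℕ} (K : Set (PM n)) : Set (PM n) := PM.neg '' K

/-- The partition `I⁻` transported along negation: `x ∼ y` in `negPart I` iff `-x ∼ -y` in `I`. -/
def negPart {n : ℕ} (I : Setoid (PM n)) : Setoid (PM n) := Setoid.comap PM.neg I

/-- A set partition `I` of `[±n]` is *signed* if for every block `K` of `I` the set `-K` is
also a block; equivalently, `x ∼ y ↔ -x ∼ -y` for all `x, y`. -/
def IsSigned {n : ℕ} (I : Setoid (PM n)) : Prop :=
  ∀ x y : PM n, I x y ↔ I (PM.neg x) (PM.neg y)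

/-- A *zero block* of a partition `I` is a block `K` with `-K = K`. -/
def IsZeroBlock {n : ℕ} (I : Setoid (PM n)) (K : Set (PM n)) : Prop :=
  K ∈ I.classes ∧ negSet K = K

/-- A `Bₙ`-partition: a signed partition of `[±n]` with at most one zero block. -/
def IsBPart {n : ℕ} (I : Setoid (PM n)) : Prop :=
  IsSigned I ∧ Set.Subsingleton {K | IsZeroBlock I K}

/-- A *restricted* signed partition: all its zero blocks have more than two elements. -/
def IsRestricted {n : ℕ} (I : Setoid (PM n)) : Prop :=
  IsSigned I ∧ ∀ K : Set (PM n), IsZeroBlock I K → 2 < K.ncard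

/-- A `Dₙ`-partition: a `Bₙ`-partition whose zero block (if present) has more than two
elements. -/
def IsDPart {n : ℕ} (I : Setoid (PM n)) : Prop :=
  IsBPart I ∧ ∀ K : Set (PM n), IsZeroBlock I K → 2 < K.ncard

/-- For `i < j` in `[±n]`, the signed partition `ε_{i,j} = μ_{-j,-i} ⊔ μ_{i,j}`. -/
def eps {n : ℕ} (i j : PM n) : Setoid (PM n) := mu (PM.neg j) (PM.neg i) ⊔ mu i j

theorem PM.neg_injective {n : ℕ} : Function.Injective (PM.neg : PM n → PM n) :=
  Function.LeftInverse.injective PM.neg_neg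

theorem negPart_rel {n : ℕ} (I : Setoid (PM n)) (x y : PM n) :
    negPart I x y ↔ I (PM.neg x) (PM.neg y) := Iff.rfl

theorem negPart_mono {n : ℕ} {I J : Setoid (PM n)} (h : I ≤ J) : negPart I ≤ negPart J := by
  rw [Setoid.le_def] at h ⊢
  intro x y hxy
  exact h hxy

theorem negPart_negPart {n : ℕ} (I : Setoid (PM n)) : negPart (negPart I) = I := by
  apply Setoid.ext
  intro x y
  show I (PM.neg (PM.neg x)) (PM.neg (PM.neg y)) ↔ I x y
  rw [PM.neg_neg, PM.neg_neg]

theorem negPart_sup {n : ℕ} (I J : Setoid (PM n)) :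
    negPart (I ⊔ J) = negPart I ⊔ negPart J := by
  apply le_antisymm
  · have h1 : I ⊔ J ≤ negPart (negPart I ⊔ negPart J) := by
      have h2 : negPart (negPart I) ⊔ negPart (negPart J) ≤ negPart (negPart I ⊔ negPart J) :=
        sup_le (negPart_mono le_sup_left) (negPart_mono le_sup_right)
      simpa [negPart_negPart] using h2
    have h3 := negPart_mono h1
    simpa [negPart_negPart] using h3
  · exact sup_le (negPart_mono le_sup_left) (negPart_mono le_sup_right)

theorem isSigned_iff_negPart_eq {n : ℕ} (I : Setoid (PM n)) :
    IsSigned I ↔ negPart I = I := by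
  constructor
  · intro h
    apply Setoid.ext
    intro x y
    exact (h x y).symm
  · intro h x y
    have h' := Setoid.ext_iff.mp h x y
    exact h'.symm

/-- The submonoid `SPₙ` of signed partitions of `[±n]`. -/
def SPn (n : ℕ) : Submonoid (Setoid (PM n)) where
  carrier := {I | IsSigned I}
  one_mem' := by
    intro x y
    show (⊥ : Setoid (PM n)) x y ↔ (⊥ : Setoid (PM n)) (PM.neg x) (PM.neg y)
    simp only [Setoid.bot_def]
    exact ⟨fun h => congrArg PM.neg h, fun h => PM.neg_injective h⟩
  mul_mem' := by
    intro a b ha hb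
    replace ha : IsSigned a := ha
    replace hb : IsSigned b := hb
    show IsSigned (a ⊔ b)
    rw [isSigned_iff_negPart_eq] at ha hb ⊢
    rw [negPart_sup, ha, hb]

/-- The set `T` of pairs `(ε_{-i,i} ⊔ ε_{-j,j}, ε_{-i,i} ⊔ ε_{i,j})` for positive
`i < j`, viewed as a binary relation on the monoid `SPₙ` of signed partitions. -/
def TRelB (n : ℕ) : ↥(SPn n) → ↥(SPn n) → Prop := fun a b =>
  ∃ i j : PM n, 0 < i.1 ∧ 0 < j.1 ∧ i < j ∧
    (a : Setoid (PM n)) = eps (PM.neg i) i ⊔ eps (PM.neg j) j ∧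
    (b : Setoid (PM n)) = eps (PM.neg i) i ⊔ eps i j

/-!
The zero closure `I₀` of a signed partition `I` merges all zero blocks of `I`: two elements are
equivalent in `I₀` iff they are equivalent in `I` or both satisfy `x ∼ -x`. A signed partition is a
`Bₙ`-partition exactly when all such elements are equivalent, so `I ≤ K ↔ I₀ ≤ K` for every
`Bₙ`-partition `K`. This makes `I ↦ I₀` compatible with joins, and both sides of each pair in `T`
have the same `Bₙ`-partitions above them, so `I₀ = J₀` is a congruence containing `T`.

Conversely, if `0 < i < j` and `i ∼ -i`, `j ∼ -j` in `I`, then `I` absorbs `ε_{-i,i} ⊔ ε_{-j,j}`,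
so multiplying by the pair of `T` for `(i, j)` relates `I` to `I ⊔ ε_{i,j}`. Doing this for all such
pairs relates `I` to a `Bₙ`-partition, which must be `I₀`.
-/

theorem isLeast_sup_of_isLeast {α : Type*} [SemilatticeSup α] {B : α → Prop}
    {I J cI cJ cIJ : α} (hI : IsLeast {K | B K ∧ I ≤ K} cI) (hJ : IsLeast {K | B K ∧ J ≤ K} cJ)
    (hIJ : IsLeast {K | B K ∧ I ⊔ J ≤ K} cIJ) :
    IsLeast {K | B K ∧ cI ≤ K ∧ cJ ≤ K} cIJ := by
  obtain ⟨⟨hB, hle⟩, hleast⟩ := hIJ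
  refine ⟨⟨hB, hI.2 ⟨hB, le_sup_left.trans hle⟩, hJ.2 ⟨hB, le_sup_right.trans hle⟩⟩, ?_⟩
  rintro K ⟨hK, hIK, hJK⟩
  exact hleast ⟨hK, sup_le (hI.1.2.trans hIK) (hJ.1.2.trans hJK)⟩

section Mu

variable {α : Type*}

theorem mu_rel (a b : α) : mu a b a b :=
  Relation.EqvGen.rel a b ⟨Set.mem_insert _ _, Set.mem_insert_of_mem _ rfl⟩

theorem mu_le {I : Setoid α} {a b : α} (h : I a b) : mu a b ≤ I := by
  refine Setoid.eqvGen_le fun x y ⟨hx, hy⟩ => ?_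
  rcases hx with rfl | rfl <;> rcases hy with rfl | rfl
  exacts [I.refl' _, h, I.symm' h, I.refl' _]

theorem mu_comm (a b : α) : mu a b = mu b a := by
  rw [mu, mu, Set.pair_comm]

end Mu

section Signed

variable {n : ℕ}

instance : Finite (PM n) :=
  ((Set.finite_Icc (-(n : ℤ)) n).subset fun _ hk => abs_le.mp hk.2).to_subtype

theorem negPart_mu (a b : PM n) : negPart (mu a b) = mu a.neg b.neg := by
  have key : ∀ a b : PM n, mu a b ≤ negPart (mu a.neg b.neg) := fun a b =>
    mu_le (mu_rel a.neg b.neg)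
  apply le_antisymm
  · simpa only [negPart_negPart] using negPart_mono (key a b)
  · simpa only [PM.neg_neg] using key a.neg b.neg

theorem isSigned_eps (i j : PM n) : IsSigned (eps i j) := by
  rw [isSigned_iff_negPart_eq, eps, negPart_sup, negPart_mu, negPart_mu, PM.neg_neg, PM.neg_neg,
    mu_comm j i, mu_comm i.neg j.neg, sup_comm]

theorem eps_rel (i j : PM n) : eps i j i j :=
  (le_sup_right : mu i j ≤ eps i j) (mu_rel i j)

theorem eps_le {K : Setoid (PM n)} (hK : IsSigned K) {i j : PM n} (h : K i j) : eps i j ≤ K :=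
  sup_le (mu_le (K.symm' ((hK i j).mp h))) (mu_le h)

theorem eps_le_iff {K : Setoid (PM n)} (hK : IsSigned K) {i j : PM n} : eps i j ≤ K ↔ K i j :=
  ⟨fun h => h (eps_rel i j), eps_le hK⟩

theorem IsSigned.rel_neg_of_rel_neg {K : Setoid (PM n)} (hK : IsSigned K) {x y : PM n}
    (hxy : K x y) (hx : K x x.neg) : K y y.neg :=
  K.trans' (K.trans' (K.symm' hxy) hx) ((hK x y).mp hxy)

theorem rel_abs_of_rel_neg {K : Setoid (PM n)} {x : PM n} (hx : K x x.neg) : K x x.abs := by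
  rcases lt_or_gt_of_ne x.2.1 with h | h
  · rwa [show x.abs = x.neg from Subtype.ext (abs_of_neg h)]
  · rw [show x.abs = x from Subtype.ext (abs_of_pos h)]

theorem IsSigned.negSet_class {K : Setoid (PM n)} (hK : IsSigned K) {z : PM n}
    (hz : K z z.neg) : negSet {w | K w z} = {w | K w z} := by
  ext w
  constructor
  · rintro ⟨v, hv, rfl⟩
    exact K.trans' ((hK v z).mp hv) (K.symm' hz)
  · intro hw
    refine ⟨w.neg, ?_, PM.neg_neg w⟩
    show K w.neg z
    simpa only [PM.neg_neg] using (hK w z.neg).mp (K.trans' hw hz)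

theorem isBPart_iff {K : Setoid (PM n)} :
    IsBPart K ↔ IsSigned K ∧ ∀ x y : PM n, K x x.neg → K y y.neg → K x y := by
  refine and_congr_right fun hK => ⟨fun h x y hx hy => ?_, fun h A hA B hB => ?_⟩
  · have hxy := h ⟨K.mem_classes x, hK.negSet_class hx⟩ ⟨K.mem_classes y, hK.negSet_class hy⟩
    exact (Set.ext_iff.mp hxy x).mp (K.refl' x)
  · obtain ⟨⟨a, rfl⟩, hA⟩ := hA
    obtain ⟨⟨b, rfl⟩, hB⟩ := hB
    have ha : a.neg ∈ {x | K x a} := hA ▸ ⟨a, K.refl' a, rfl⟩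
    have hb : b.neg ∈ {x | K x b} := hB ▸ ⟨b, K.refl' b, rfl⟩
    have hab := h a b (K.symm' ha) (K.symm' hb)
    ext w
    exact ⟨fun hw => K.trans' hw hab, fun hw => K.trans' hw (K.symm' hab)⟩

theorem IsBPart.rel_iff_rel_neg {K : Setoid (PM n)} (hK : IsBPart K) {i j : PM n}
    (hi : K i i.neg) : K i j ↔ K j j.neg :=
  ⟨fun h => hK.1.rel_neg_of_rel_neg h hi, (isBPart_iff.mp hK).2 i j hi⟩

end Signed

section ZeroClosure

variable {n : ℕ}

def zeroCl (I : Setoid (PM n)) : Setoid (PM n) :=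
  Relation.EqvGen.setoid fun x y => I x y ∨ (I x x.neg ∧ I y y.neg)

theorem le_zeroCl (I : Setoid (PM n)) : I ≤ zeroCl I :=
  fun _ _ h => Relation.EqvGen.rel _ _ (Or.inl h)

theorem zeroCl_rel {I : Setoid (PM n)} (hI : IsSigned I) {x y : PM n} :
    zeroCl I x y ↔ I x y ∨ (I x x.neg ∧ I y y.neg) := by
  refine ⟨fun h => ?_, fun h => Relation.EqvGen.rel x y h⟩
  induction h with
  | rel _ _ h => exact h
  | refl a => exact Or.inl (I.refl' a)
  | symm a b _ ih => exact ih.imp I.symm' And.symm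
  | trans a b c _ _ ih₁ ih₂ =>
    rcases ih₁ with hab | ⟨ha, hb⟩ <;> rcases ih₂ with hbc | ⟨hb', hc⟩
    · exact Or.inl (I.trans' hab hbc)
    · exact Or.inr ⟨hI.rel_neg_of_rel_neg (I.symm' hab) hb', hc⟩
    · exact Or.inr ⟨ha, hI.rel_neg_of_rel_neg hbc hb⟩
    · exact Or.inr ⟨ha, hc⟩

theorem isSigned_zeroCl {I : Setoid (PM n)} (hI : IsSigned I) : IsSigned (zeroCl I) := by
  intro x y
  rw [zeroCl_rel hI, zeroCl_rel hI, PM.neg_neg, PM.neg_neg, ← hI x y, I.comm' (x := x.neg),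
    I.comm' (x := y.neg)]

theorem zeroCl_rel_neg {I : Setoid (PM n)} (hI : IsSigned I) {x : PM n} :
    zeroCl I x x.neg ↔ I x x.neg := by
  rw [zeroCl_rel hI, or_iff_left_of_imp And.left]

theorem isBPart_zeroCl {I : Setoid (PM n)} (hI : IsSigned I) : IsBPart (zeroCl I) :=
  isBPart_iff.mpr ⟨isSigned_zeroCl hI, fun _ _ hx hy => Relation.EqvGen.rel _ _
    (Or.inr ⟨(zeroCl_rel_neg hI).mp hx, (zeroCl_rel_neg hI).mp hy⟩)⟩

theorem zeroCl_le {I K : Setoid (PM n)} (hK : IsBPart K) (hIK : I ≤ K) : zeroCl I ≤ K := by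
  refine Setoid.eqvGen_le fun x y hxy => ?_
  rcases hxy with h | ⟨hx, hy⟩
  · exact hIK h
  · exact (isBPart_iff.mp hK).2 x y (hIK hx) (hIK hy)

theorem isLeast_zeroCl {I : Setoid (PM n)} (hI : IsSigned I) :
    IsLeast {K | IsBPart K ∧ I ≤ K} (zeroCl I) :=
  ⟨⟨isBPart_zeroCl hI, le_zeroCl I⟩, fun _ ⟨hK, hIK⟩ => zeroCl_le hK hIK⟩

theorem zeroCl_eq_self {K : Setoid (PM n)} (hK : IsBPart K) : zeroCl K = K :=
  le_antisymm (zeroCl_le hK le_rfl) (le_zeroCl K)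

theorem zeroCl_le_iff {I K : Setoid (PM n)} (hK : IsBPart K) : zeroCl I ≤ K ↔ I ≤ K :=
  ⟨(le_zeroCl I).trans, zeroCl_le hK⟩

theorem zeroCl_eq_zeroCl_iff {I J : Setoid (PM n)} (hI : IsSigned I) (hJ : IsSigned J) :
    zeroCl I = zeroCl J ↔ ∀ K, IsBPart K → (I ≤ K ↔ J ≤ K) := by
  refine ⟨fun h K hK => by rw [← zeroCl_le_iff hK, h, zeroCl_le_iff hK], fun h => ?_⟩
  exact le_antisymm (zeroCl_le (isBPart_zeroCl hJ) ((h _ (isBPart_zeroCl hJ)).mpr (le_zeroCl J)))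
    (zeroCl_le (isBPart_zeroCl hI) ((h _ (isBPart_zeroCl hI)).mp (le_zeroCl I)))

end ZeroClosure

namespace SPn

variable {n : ℕ}

theorem coe_mul (a b : SPn n) : ((a * b : SPn n) : Setoid (PM n)) = (a : Setoid (PM n)) ⊔ b := rfl

theorem mul_eq_left {a b : SPn n} (h : (b : Setoid (PM n)) ≤ a) : a * b = a :=
  Subtype.ext (sup_eq_left.mpr h)

def eps (i j : PM n) : SPn n := ⟨_root_.eps i j, isSigned_eps i j⟩

def zeroClCon (n : ℕ) : Con (SPn n) where
  r a b := zeroCl (a : Setoid (PM n)) = zeroCl b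
  iseqv := ⟨fun _ => rfl, Eq.symm, Eq.trans⟩
  mul' {a b c d} hab hcd := by
    rw [zeroCl_eq_zeroCl_iff (a * c).2 (b * d).2]
    intro K hK
    rw [coe_mul, coe_mul, sup_le_iff, sup_le_iff, ← zeroCl_le_iff hK, ← zeroCl_le_iff (I := c) hK,
      hab, hcd, zeroCl_le_iff hK, zeroCl_le_iff hK]

theorem zeroCl_eq_of_TRelB {a b : SPn n} (h : TRelB n a b) :
    zeroCl (a : Setoid (PM n)) = zeroCl b := by
  obtain ⟨i, j, -, -, -, ha, hb⟩ := h
  rw [zeroCl_eq_zeroCl_iff a.2 b.2, ha, hb]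
  intro K hK
  rw [sup_le_iff, sup_le_iff, eps_le_iff hK.1, eps_le_iff hK.1, eps_le_iff hK.1,
    K.comm' (x := i.neg), K.comm' (x := j.neg)]
  exact and_congr_right fun hi => (hK.rel_iff_rel_neg hi).symm

theorem zeroCl_eq_of_conGen {a b : SPn n} (h : conGen (TRelB n) a b) :
    zeroCl (a : Setoid (PM n)) = zeroCl b :=
  (Con.conGen_le (c := zeroClCon n)).mpr (fun _ _ => zeroCl_eq_of_TRelB) h

theorem conGen_mul_eps {a : SPn n} {i j : PM n} (hi : 0 < i.1) (hj : 0 < j.1) (hij : i < j)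
    (hzi : (a : Setoid (PM n)) i i.neg) (hzj : (a : Setoid (PM n)) j j.neg) :
    conGen (TRelB n) a (a * eps i j) := by
  have absorb : ∀ {k : PM n}, (a : Setoid (PM n)) k k.neg → a * eps k.neg k = a := fun hk =>
    mul_eq_left (eps_le a.2 (a.1.symm' hk))
  have hT : conGen (TRelB n) (eps i.neg i * eps j.neg j) (eps i.neg i * eps i j) :=
    ConGen.Rel.of _ _ ⟨i, j, hi, hj, hij, rfl, rfl⟩
  simpa only [← mul_assoc, absorb hzi, absorb hzj] using (conGen (TRelB n)).mul (Con.refl _ a) hT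

theorem conGen_mul_prod_eps (a : SPn n) (S : Finset (PM n × PM n))
    (hS : ∀ p ∈ S, 0 < p.1.1 ∧ 0 < p.2.1 ∧ p.1 < p.2 ∧
      (a : Setoid (PM n)) p.1 p.1.neg ∧ (a : Setoid (PM n)) p.2 p.2.neg) :
    conGen (TRelB n) a (a * ∏ p ∈ S, eps p.1 p.2) := by
  classical
  induction S using Finset.induction_on with
  | empty => simpa only [Finset.prod_empty, mul_one] using Con.refl _ a
  | insert p S hp ih =>
    obtain ⟨hi, hj, hij, hzi, hzj⟩ := hS p (Finset.mem_insert_self p S)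
    have hle : (a : Setoid (PM n)) ≤ ↑(a * ∏ q ∈ S, eps q.1 q.2) := le_sup_left
    rw [Finset.prod_insert hp, mul_comm (eps p.1 p.2), ← mul_assoc]
    exact (ih fun q hq => hS q (Finset.mem_insert_of_mem hq)).trans
      (conGen_mul_eps hi hj hij (hle hzi) (hle hzj))

theorem le_mul_prod_of_mem (a : SPn n) {ι : Type*} {S : Finset ι} (f : ι → SPn n) {p : ι}
    (hp : p ∈ S) : (f p : Setoid (PM n)) ≤ ↑(a * ∏ q ∈ S, f q) := by
  classical
  rw [← Finset.mul_prod_erase S f hp]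
  exact le_sup_left.trans le_sup_right

theorem exists_conGen_isBPart (a : SPn n) :
    ∃ b : SPn n, conGen (TRelB n) a b ∧ IsBPart (b : Setoid (PM n)) := by
  let Z : Set (PM n × PM n) := {p | 0 < p.1.1 ∧ 0 < p.2.1 ∧ p.1 < p.2 ∧
    (a : Setoid (PM n)) p.1 p.1.neg ∧ (a : Setoid (PM n)) p.2 p.2.neg}
  let S := (Set.toFinite Z).toFinset
  have hS : ∀ p, p ∈ S ↔ p ∈ Z := fun _ => Set.Finite.mem_toFinset _
  set b := a * ∏ p ∈ S, eps p.1 p.2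
  have hab : conGen (TRelB n) a b := conGen_mul_prod_eps a S fun p hp => (hS p).mp hp
  have hle : (a : Setoid (PM n)) ≤ b := le_sup_left
  have zero_of_zero : ∀ x, (b : Setoid (PM n)) x x.neg → (a : Setoid (PM n)) x x.neg := by
    intro x hx
    rw [← zeroCl_rel_neg a.2, zeroCl_eq_of_conGen hab]
    exact le_zeroCl _ hx
  have rel_pos : ∀ i j : PM n, 0 < i.1 → 0 < j.1 →
      (a : Setoid (PM n)) i i.neg → (a : Setoid (PM n)) j j.neg → (b : Setoid (PM n)) i j := by
    intro i j hi hj hzi hzj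
    rcases lt_trichotomy i j with h | rfl | h
    · exact le_mul_prod_of_mem a _ ((hS (i, j)).mpr ⟨hi, hj, h, hzi, hzj⟩) (eps_rel i j)
    · exact b.1.refl' i
    · exact b.1.symm' (le_mul_prod_of_mem a _ ((hS (j, i)).mpr ⟨hj, hi, h, hzj, hzi⟩) (eps_rel j i))
  refine ⟨b, hab, isBPart_iff.mpr ⟨b.2, fun x y hx hy => ?_⟩⟩
  replace hx := zero_of_zero x hx
  replace hy := zero_of_zero y hy
  have hxa := rel_abs_of_rel_neg hx
  have hya := rel_abs_of_rel_neg hy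
  have habs : (b : Setoid (PM n)) x.abs y.abs := rel_pos _ _ (abs_pos.mpr x.2.1)
    (abs_pos.mpr y.2.1) (a.2.rel_neg_of_rel_neg hxa hx) (a.2.rel_neg_of_rel_neg hya hy)
  exact b.1.trans' (hle hxa) (b.1.trans' habs (hle (a.1.symm' hya)))

theorem conGen_iff_zeroCl_eq {a b : SPn n} :
    conGen (TRelB n) a b ↔ zeroCl (a : Setoid (PM n)) = zeroCl b := by
  refine ⟨zeroCl_eq_of_conGen, fun h => ?_⟩
  obtain ⟨a', ha, ha'⟩ := exists_conGen_isBPart a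
  obtain ⟨b', hb, hb'⟩ := exists_conGen_isBPart b
  have hab' : a' = b' := Subtype.ext <| by
    rw [← zeroCl_eq_self ha', ← zeroCl_eq_self hb', ← zeroCl_eq_of_conGen ha,
      ← zeroCl_eq_of_conGen hb, h]
  exact ha.trans (hab' ▸ hb.symm)

end SPn

theorem zeroClosure_mul_and_conGen_T_general (n : ℕ) :
    (∀ I J : Setoid (PM n), IsSigned I → IsSigned J →
      ∀ cI cJ cIJ : Setoid (PM n),
        IsLeast {K | IsBPart K ∧ I ≤ K} cI →
        IsLeast {K | IsBPart K ∧ J ≤ K} cJ →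
        IsLeast {K | IsBPart K ∧ I ⊔ J ≤ K} cIJ →
        IsLeast {K | IsBPart K ∧ cI ≤ K ∧ cJ ≤ K} cIJ) ∧
    ∀ a b : ↥(SPn n),
      conGen (TRelB n) a b ↔
        ∃ c : Setoid (PM n),
          IsLeast {K | IsBPart K ∧ (a : Setoid (PM n)) ≤ K} c ∧
          IsLeast {K | IsBPart K ∧ (b : Setoid (PM n)) ≤ K} c := by
  refine ⟨fun _ _ _ _ _ _ _ => isLeast_sup_of_isLeast, fun a b => ?_⟩
  rw [SPn.conGen_iff_zeroCl_eq]
  exact ⟨fun h => ⟨_, isLeast_zeroCl a.2, h ▸ isLeast_zeroCl b.2⟩, fun ⟨c, ha, hb⟩ =>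
    (ha.unique (isLeast_zeroCl a.2)).symm.trans (hb.unique (isLeast_zeroCl b.2))⟩

/-- Writing `I₀` for the zero closure of a signed partition `I`
(the least `Bₙ`-partition coarser than `I`):
(1) `(I ⊔ J)₀ = I₀ ·_B J₀` for all signed partitions `I, J`, where `·_B` is the least
common `Bₙ`-coarsening; and
(2) the congruence on `SPₙ` generated by `T` equals `{(I, J) : I₀ = J₀}`. -/
theorem zeroClosure_mul_and_conGen_T (n : ℕ) (hn : 2 ≤ n) :
    (∀ I J : Setoid (PM n), IsSigned I → IsSigned J →
      ∀ cI cJ cIJ : Setoid (PM n),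
        IsLeast {K | IsBPart K ∧ I ≤ K} cI →
        IsLeast {K | IsBPart K ∧ J ≤ K} cJ →
        IsLeast {K | IsBPart K ∧ I ⊔ J ≤ K} cIJ →
        IsLeast {K | IsBPart K ∧ cI ≤ K ∧ cJ ≤ K} cIJ) ∧
    ∀ a b : ↥(SPn n),
      conGen (TRelB n) a b ↔
        ∃ c : Setoid (PM n),
          IsLeast {K | IsBPart K ∧ (a : Setoid (PM n)) ≤ K} c ∧
          IsLeast {K | IsBPart K ∧ (b : Setoid (PM n)) ≤ K} c :=
  zeroClosure_mul_and_conGen_T_general n
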